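/- arXiv:1912.11699 — 4 statements merged into one kernel-verified Lean document; each statement's English description precedes it below -/
import Mathlib

section
/- Let M = [[2,0],[1,1]], let A = [[1,0],[-1,1]], and let B = [[1/2,0],[0,1]] be rational 2×2 matrices. For all natural numbers i, the product M^i * A^(2^i - 1) * B^i equals the identity matrix. -/
lemma bs12_Mpow (i : ℕ) : (!![2, 0; 1, 1] : Matrix (Fin 2) (Fin 2) ℚ) ^ i =
    !![(2:ℚ)^i, 0; (2:ℚ)^i - 1, 1] := by
  induction i with
  | zero => simp [Matrix.one_fin_two]
  | succ n ih =>
    rw [pow_succ, ih, pow_succ]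
    ext a b
    fin_cases a <;> fin_cases b <;> simp [Matrix.mul_apply, Fin.sum_univ_succ] <;> ring

lemma bs12_Apow (n : ℕ) : (!![1, 0; -1, 1] : Matrix (Fin 2) (Fin 2) ℚ) ^ n =
    !![1, 0; -(n:ℚ), 1] := by
  induction n with
  | zero => simp [Matrix.one_fin_two]
  | succ n ih =>
    rw [pow_succ, ih]
    ext a b
    fin_cases a <;> fin_cases b <;> simp [Matrix.mul_apply, Fin.sum_univ_succ] <;> push_cast <;> ring

lemma bs12_Bpow (i : ℕ) : (!![1/2, 0; 0, 1] : Matrix (Fin 2) (Fin 2) ℚ) ^ i =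
    !![(1/2:ℚ)^i, 0; 0, 1] := by
  induction i with
  | zero => simp [Matrix.one_fin_two]
  | succ n ih =>
    rw [pow_succ, ih, pow_succ]
    ext a b
    fin_cases a <;> fin_cases b <;> simp [Matrix.mul_apply, Fin.sum_univ_succ] <;> ring

/-- With `M = [[2,0],[1,1]]`, `A = [[1,0],[-1,1]]`, `B = [[1/2,0],[0,1]]` over `ℚ`,
for every natural number `i` we have `M^i * A^(2^i - 1) * B^i = 1`. -/
theorem bs12_automaton_accepts_powers_of_two (i : ℕ) :
    let M : Matrix (Fin 2) (Fin 2) ℚ := !![2, 0; 1, 1]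
    let A : Matrix (Fin 2) (Fin 2) ℚ := !![1, 0; -1, 1]
    let B : Matrix (Fin 2) (Fin 2) ℚ := !![1/2, 0; 0, 1]
    M ^ i * A ^ (2 ^ i - 1) * B ^ i = 1 := by
  intro M A B
  rw [show M = !![2, 0; 1, 1] from rfl, show A = !![1, 0; -1, 1] from rfl,
    show B = !![1/2, 0; 0, 1] from rfl, bs12_Mpow, bs12_Apow, bs12_Bpow]
  have hc : ((2 ^ i - 1 : ℕ) : ℚ) = (2:ℚ)^i - 1 := by
    push_cast [Nat.one_le_two_pow]; ring
  have h2 : (1/2:ℚ)^i * 2^i = 1 := by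
    rw [← mul_pow]; norm_num
  ext a b
  fin_cases a <;> fin_cases b <;>
    simp [Matrix.mul_apply, Fin.sum_univ_succ, Matrix.one_apply, hc] <;>
    nlinarith [h2]
end

section
/- In the generalized Stern–Brocot encoding over an alphabet of size k, the encoding vector of a nonempty string has a unique maximum entry, namely at the position of the last symbol of the string, and all entries are positive. -/
def sternMatrix (k : ℕ) (j : Fin k) : Matrix (Fin k) (Fin k) ℤ :=
  fun i i' => if i' = j then 1 else if i = i' then 1 else 0

def sternEncode (k : ℕ) (w : List (Fin k)) : Fin k → ℤ :=
  w.foldl (fun v j => Matrix.vecMul v (sternMatrix k j)) (fun _ => 1)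

lemma vecMul_stern {k : ℕ} (v : Fin k → ℤ) (j : Fin k) :
    Matrix.vecMul v (sternMatrix k j) = fun i => if i = j then ∑ x, v x else v i := by
  funext i
  simp only [Matrix.vecMul, sternMatrix, dotProduct]
  by_cases h : i = j
  · simp [h]
  · simp [h, mul_ite, mul_one, mul_zero, Finset.sum_ite_eq']

lemma stern_step {k : ℕ} (v : Fin k → ℤ) (hv : ∀ i, 0 < v i) (j : Fin k) :
    (∀ i, 0 < Matrix.vecMul v (sternMatrix k j) i) ∧
    (∀ i, i ≠ j → Matrix.vecMul v (sternMatrix k j) i < Matrix.vecMul v (sternMatrix k j) j) := by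
  rw [vecMul_stern]
  constructor
  · intro i
    by_cases h : i = j
    · simp only [h, if_pos rfl]
      exact Finset.sum_pos (fun x _ => hv x) ⟨j, Finset.mem_univ j⟩
    · simpa [h] using hv i
  · intro i hij
    simp only [hij, if_neg, if_pos rfl]
    calc v i < v i + ∑ x ∈ Finset.univ.erase i, v x := by
          have : 0 < ∑ x ∈ Finset.univ.erase i, v x :=
            Finset.sum_pos (fun x _ => hv x)
              ⟨j, Finset.mem_erase.mpr ⟨Ne.symm hij, Finset.mem_univ j⟩⟩
          linarith
      _ = ∑ x, v x := Finset.add_sum_erase _ _ (Finset.mem_univ i)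

lemma stern_main {k : ℕ} : ∀ (w : List (Fin k)) (hw : w ≠ []) (v : Fin k → ℤ),
    (∀ i, 0 < v i) →
    (∀ i, 0 < w.foldl (fun v j => Matrix.vecMul v (sternMatrix k j)) v i) ∧
    (∀ i, i ≠ w.getLast hw →
      w.foldl (fun v j => Matrix.vecMul v (sternMatrix k j)) v i <
      w.foldl (fun v j => Matrix.vecMul v (sternMatrix k j)) v (w.getLast hw))
  | [a], _, v, hv => by simpa using stern_step v hv a
  | a :: b :: rest, _, v, hv => by
    have h := stern_main (b :: rest) (by simp) (Matrix.vecMul v (sternMatrix k a))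
      (stern_step v hv a).1
    simpa [List.getLast] using h

/-- The encoding vector of a nonempty string has all entries positive and a unique
maximum entry, located at the position of the last symbol of the string. -/
theorem sternEncode_pos_and_unique_max (k : ℕ) (w : List (Fin k)) (hw : w ≠ []) :
    (∀ i : Fin k, 0 < sternEncode k w i) ∧
    (∀ i : Fin k, i ≠ w.getLast hw → sternEncode k w i < sternEncode k w (w.getLast hw)) := by
  exact stern_main w hw (fun _ => 1) (fun _ => one_pos)
end

section
/- Converse construction: given a finite system of k linear homogeneous equations Σ_i b_{t,i}·n_i = 0 (t = 1,…,k) with integer coefficients b_{t,i}, choose distinct primes p₁,…,p_k and set a_i = ∏_t p_t^{b_{t,i}} ∈ ℚ₊. Then for every vector (n₁,…,nₘ) ∈ ℕᵐ, ∏_i a_i^{n_i} = 1 if and only if (n₁,…,nₘ) solves the system. -/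
/-!
Taking the `p s`-adic valuation of `∏ t, p t ^ e t` recovers `e s`, because distinct primes have
valuation zero at each other. Hence a product of integer powers of distinct primes is `1` only when
all exponents vanish, and `∏ i, a i ^ n i` is exactly such a product with exponents
`e t = ∑ i, b t i * n i`.
-/

open Finset

theorem zpow_finset_sum₀ {ι G₀ : Type*} [CommGroupWithZero G₀] {x : G₀} (hx : x ≠ 0)
    (s : Finset ι) (e : ι → ℤ) : x ^ (∑ i ∈ s, e i) = ∏ i ∈ s, x ^ e i := by
  induction s using Finset.cons_induction with
  | empty => simp
  | cons i s _ ih => rw [sum_cons, prod_cons, zpow_add₀ hx, ih]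

section padicValRat

variable (p : ℕ) [Fact p.Prime]

theorem padicValRat_finset_prod {ι : Type*} {s : Finset ι} {f : ι → ℚ} (hf : ∀ i ∈ s, f i ≠ 0) :
    padicValRat p (∏ i ∈ s, f i) = ∑ i ∈ s, padicValRat p (f i) := by
  induction s using Finset.cons_induction with
  | empty => simp
  | cons i s _ ih =>
    rw [forall_mem_cons] at hf
    rw [prod_cons, sum_cons, padicValRat.mul hf.1 (prod_ne_zero_iff.2 hf.2), ih hf.2]

theorem padicValRat_natCast_prime {q : ℕ} (hq : q.Prime) :
    padicValRat p q = if p = q then 1 else 0 := by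
  have : Fact q.Prime := ⟨hq⟩
  split_ifs with h
  · subst h; exact padicValRat.self hq.one_lt
  · rw [padicValRat.of_nat, padicValNat_primes h, Nat.cast_zero]

end padicValRat

theorem padicValRat_prod_prime_zpow {ι : Type*} [Fintype ι] [DecidableEq ι] {p : ι → ℕ}
    (hp : ∀ t, (p t).Prime) (hpinj : Function.Injective p) (e : ι → ℤ) (s : ι)
    [Fact (p s).Prime] : padicValRat (p s) (∏ t, (p t : ℚ) ^ e t) = e s := by
  have hpne (t : ι) : (p t : ℚ) ^ e t ≠ 0 := zpow_ne_zero _ (Nat.cast_ne_zero.2 (hp t).ne_zero)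
  simp only [padicValRat_finset_prod _ fun t _ => hpne t, padicValRat.zpow,
    padicValRat_natCast_prime _ (hp _), hpinj.eq_iff, mul_ite, mul_one, mul_zero,
    sum_ite_eq, mem_univ, if_true]

theorem prod_prime_zpow_eq_one_iff {ι : Type*} [Fintype ι] {p : ι → ℕ}
    (hp : ∀ t, (p t).Prime) (hpinj : Function.Injective p) (e : ι → ℤ) :
    ∏ t, (p t : ℚ) ^ e t = 1 ↔ ∀ t, e t = 0 := by
  classical
  refine ⟨fun h s => ?_, fun h => by simp [h]⟩
  have : Fact (p s).Prime := ⟨hp s⟩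
  rw [← padicValRat_prod_prime_zpow hp hpinj e s, h, padicValRat.one]

/-- Converse construction: given integer coefficients `b t i` of `k` linear homogeneous
equations in `m` unknowns, distinct primes `p t`, and `a i = ∏ t, p t ^ b t i ∈ ℚ`,
a vector `n : Fin m → ℕ` satisfies `∏ i, a i ^ n i = 1` iff it solves the system. -/
theorem stateless_dfamw_converse {k m : ℕ} (b : Fin k → Fin m → ℤ)
    (p : Fin k → ℕ) (hp : ∀ t, (p t).Prime) (hpinj : Function.Injective p)
    (a : Fin m → ℚ) (ha : ∀ i, a i = ∏ t, (p t : ℚ) ^ b t i)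
    (n : Fin m → ℕ) :
    (∏ i, a i ^ n i) = 1 ↔ ∀ t, (∑ i, b t i * n i) = 0 := by
  have hprod : ∏ i, a i ^ n i = ∏ t, (p t : ℚ) ^ (∑ i, b t i * n i) := by
    simp only [ha, ← zpow_natCast, ← prod_zpow, ← zpow_mul]
    rw [prod_comm]
    exact prod_congr rfl fun t _ =>
      (zpow_finset_sum₀ (x := (p t : ℚ)) (Nat.cast_ne_zero.2 (hp t).ne_zero) _ _).symm
  rw [hprod, prod_prime_zpow_eq_one_iff hp hpinj]
end

section
/- Let G be a finitely generated group with generating set A and word metric length |g|_A, and define the growth function g_G(n) = |{ g ∈ G : |g|_A ≤ n }|. For the word problem language W(G) ⊆ (A ∪ A⁻¹)*, the maximum size U_{W(G)}(n) of a set of uniformly n-dissimilar strings satisfies U_{W(G)}(n) ≥ g_G(⌊n/2⌋). -/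
/-! Pick, for each element `g` of the ball of radius `⌊n/2⌋`, a word `w_g` of length at most `⌊n/2⌋`
representing it. Reversing `w_g` and inverting each letter gives a word `v` for `g⁻¹` of the same length, and
`w_{g'} v` represents `g' g⁻¹`, which is trivial exactly when `g' = g`. -/

section WordProblem

variable {G : Type*} [Group G] {X : Type*}

def IsUniformlyDissimilar (L : List X → Prop) (n : ℕ) (S : Finset (List X)) : Prop :=
  ∀ w ∈ S, ∃ v : List X, (w ++ v).length ≤ n ∧ L (w ++ v) ∧
    ∀ w' ∈ S, w' ≠ w → (w' ++ v).length ≤ n ∧ ¬ L (w' ++ v)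

variable (eval : X → G)

lemma exists_word_length_eq_prod_eq_inv (hinv : ∀ x : X, ∃ x' : X, eval x' = (eval x)⁻¹)
    (u : List X) :
    ∃ v : List X, v.length = u.length ∧ (v.map eval).prod = (u.map eval).prod⁻¹ := by
  induction u with
  | nil => exact ⟨[], rfl, by simp⟩
  | cons x u ih =>
    obtain ⟨v, hlen, hprod⟩ := ih
    obtain ⟨x', hx'⟩ := hinv x
    exact ⟨v ++ [x'], by simp [hlen], by simp [hprod, hx', mul_inv_rev]⟩

lemma prod_map_append_eq_one_iff (w v : List X) :
    ((w ++ v).map eval).prod = 1 ↔ (w.map eval).prod = (v.map eval).prod⁻¹ := by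
  rw [List.map_append, List.prod_append, mul_eq_one_iff_eq_inv]

lemma exists_finset_words_injOn_prod (m : ℕ) (T : Finset G)
    (hT : ∀ g ∈ T, ∃ u : List X, u.length ≤ m ∧ (u.map eval).prod = g) :
    ∃ S : Finset (List X), S.card = T.card ∧ (∀ w ∈ S, w.length ≤ m) ∧
      Set.InjOn (fun w : List X => (w.map eval).prod) S := by
  classical
  choose u hlen hprod using hT
  have hu : Function.Injective fun g : T => u g.1 g.2 := fun g g' h =>
    Subtype.ext <| by simpa only [hprod] using congrArg (fun w : List X => (w.map eval).prod) h
  refine ⟨T.attach.image fun g => u g.1 g.2, ?_, ?_, ?_⟩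
  · rw [Finset.card_image_of_injective _ hu, Finset.card_attach]
  · simp only [Finset.mem_image, Finset.mem_attach, true_and, forall_exists_index]
    rintro _ g rfl
    exact hlen g.1 g.2
  · simp only [Set.InjOn, Finset.coe_image, Set.mem_image, Finset.mem_coe, Finset.mem_attach,
      true_and, forall_exists_index]
    rintro _ g rfl _ g' rfl h
    rw [hprod, hprod] at h
    exact congrArg (fun g : T => u g.1 g.2) (Subtype.ext h)

lemma isUniformlyDissimilar_wordProblem (hinv : ∀ x : X, ∃ x' : X, eval x' = (eval x)⁻¹)
    (n : ℕ) (S : Finset (List X)) (hlen : ∀ w ∈ S, w.length ≤ n / 2)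
    (hinj : Set.InjOn (fun w : List X => (w.map eval).prod) S) :
    IsUniformlyDissimilar (fun u => (u.map eval).prod = 1) n S := by
  intro w hw
  obtain ⟨v, hvlen, hv⟩ := exists_word_length_eq_prod_eq_inv eval hinv w
  have hv' : (w.map eval).prod = (v.map eval).prod⁻¹ := by rw [hv, inv_inv]
  have length_le : ∀ w' ∈ S, (w' ++ v).length ≤ n := fun w' hw' => by
    have := hlen w' hw'
    have := hlen w hw
    simp only [List.length_append]
    omega
  refine ⟨v, length_le w hw, (prod_map_append_eq_one_iff eval w v).2 hv', fun w' hw' hne => ?_⟩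
  refine ⟨length_le w' hw', fun h => hne (hinj hw' hw ?_)⟩
  exact ((prod_map_append_eq_one_iff eval w' v).1 h).trans hv'.symm

end WordProblem

/-- Growth lower bound for uniform dissimilarity in the word problem language.
Let `G` be a group, `X` an alphabet equipped with an evaluation `eval : X → G`
whose image is closed under inverses (`X` plays the role of `A ∪ A⁻¹`).
For any finite set `T` of group elements, each representable by a word of length
at most `⌊n/2⌋`, there is a set `S` of strings of the same cardinality which is
uniformly `n`-dissimilar for the word problem language
`W(G) = { u | (u.map eval).prod = 1 }`.  Hence `U_{W(G)}(n) ≥ g_G(⌊n/2⌋)`. -/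
theorem word_problem_uniform_dissimilarity {G : Type*} [Group G] {X : Type*}
    (eval : X → G) (hinv : ∀ x : X, ∃ x' : X, eval x' = (eval x)⁻¹)
    (n : ℕ) (T : Finset G)
    (hT : ∀ g ∈ T, ∃ u : List X, u.length ≤ n / 2 ∧ (u.map eval).prod = g) :
    ∃ S : Finset (List X), S.card = T.card ∧
      ∀ w ∈ S, ∃ v : List X,
        (w ++ v).length ≤ n ∧ (((w ++ v).map eval).prod = 1) ∧
        ∀ w' ∈ S, w' ≠ w →
          (w' ++ v).length ≤ n ∧ ((w' ++ v).map eval).prod ≠ 1 := by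
  obtain ⟨S, hcard, hlen, hinj⟩ := exists_finset_words_injOn_prod eval (n / 2) T hT
  exact ⟨S, hcard, isUniformlyDissimilar_wordProblem eval hinv n S hlen hinj⟩
end
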